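/- For any n₂ ≤ L², every configuration of minimal energy among the configurations with exactly n₂ particles of type 2 (all in Λ⁻⁻) is tb-tiled: every minimizer of H over V*,n₂ belongs to V*,n₂^{4n₂}. -/

import Mathlib

/- Common framework: two-type Kawasaki dynamics on a finite box in ℤ². -/

abbrev Site := ℤ × ℤ
abbrev Cell := ℤ × ℤ

/-- Nearest-neighbour adjacency on ℤ². -/
def adjacent (x y : Site) : Prop := |x.1 - y.1| + |x.2 - y.2| = 1

instance (x y : Site) : Decidable (adjacent x y) :=
  inferInstanceAs (Decidable (|x.1 - y.1| + |x.2 - y.2| = 1))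

/-- The four nearest neighbours of a site. -/
def nbrs (x : Site) : Finset Site :=
  {(x.1 + 1, x.2), (x.1 - 1, x.2), (x.1, x.2 + 1), (x.1, x.2 - 1)}

/-- Internal boundary ∂⁻Λ of a finite set Λ ⊂ ℤ². -/
def intBdry (Λ : Finset Site) : Finset Site := Λ.filter (fun x => ¬ nbrs x ⊆ Λ)

/-- Λ⁻ = Λ ∖ ∂⁻Λ. -/
def inner1 (Λ : Finset Site) : Finset Site := Λ \ intBdry Λ

/-- Λ⁻⁻ = Λ⁻ ∖ ∂⁻Λ⁻. -/
def inner2 (Λ : Finset Site) : Finset Site := inner1 Λ \ intBdry (inner1 Λ)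

/-- A configuration on Λ: each site of Λ carries 0 (empty), 1 (type 1) or 2 (type 2);
sites outside Λ are empty. -/
structure Config (Λ : Finset Site) where
  val : Site → Fin 3
  zero_outside : ∀ x, x ∉ Λ → val x = 0

/-- Number of particles of type 1. -/
def numType1 {Λ : Finset Site} (η : Config Λ) : ℕ := (Λ.filter (fun x => η.val x = 1)).card

/-- Number of particles of type 2. -/
def numType2 {Λ : Finset Site} (η : Config Λ) : ℕ := (Λ.filter (fun x => η.val x = 2)).card

/-- Number of active bonds: unordered n.n. pairs of sites of Λ⁻, one carrying a 1 and the
other a 2 (each such unordered pair is counted once, as the ordered pair (type1,type2)). -/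
def numBonds {Λ : Finset Site} (η : Config Λ) : ℕ :=
  ((inner1 Λ ×ˢ inner1 Λ).filter
    (fun p => adjacent p.1 p.2 ∧ η.val p.1 = 1 ∧ η.val p.2 = 2)).card

/-- The Hamiltonian H(η) = −U·B(η) + Δ1·n1(η) + Δ2·n2(η). -/
noncomputable def energy (U Δ1 Δ2 : ℝ) {Λ : Finset Site} (η : Config Λ) : ℝ :=
  -U * numBonds η + Δ1 * numType1 η + Δ2 * numType2 η

/-- Allowed moves of the Kawasaki dynamics: hopping inside Λ, creation and annihilation
at the internal boundary. -/
def Communicates {Λ : Finset Site} (η η' : Config Λ) : Prop :=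
  (∃ x ∈ Λ, ∃ y ∈ Λ, adjacent x y ∧ η.val x = 0 ∧ η.val y ≠ 0 ∧
      η'.val = Function.update (Function.update η.val x (η.val y)) y 0) ∨
  (∃ x ∈ intBdry Λ, ∃ v : Fin 3, v ≠ 0 ∧ η.val x = 0 ∧
      η'.val = Function.update η.val x v) ∨
  (∃ x ∈ intBdry Λ, η.val x ≠ 0 ∧ η'.val = Function.update η.val x 0)

/-- ω is a path of allowed moves from η to η′. -/
def IsPath {Λ : Finset Site} (ω : List (Config Λ)) (η η' : Config Λ) : Prop :=
  ω.head? = some η ∧ ω.getLast? = some η' ∧ ω.Chain' Communicates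

/-- Communication height between two sets of configurations:
Φ(A,B) = min over paths from A to B of the maximal energy along the path. -/
noncomputable def commHeightSet (U Δ1 Δ2 : ℝ) {Λ : Finset Site}
    (A B : Set (Config Λ)) : ℝ :=
  sInf {m : ℝ | ∃ η ∈ A, ∃ η' ∈ B, ∃ ω : List (Config Λ),
    IsPath ω η η' ∧ ∀ ξ ∈ ω, energy U Δ1 Δ2 ξ ≤ m}

/-- Communication height Φ(η,η′). -/
noncomputable def commHeight (U Δ1 Δ2 : ℝ) {Λ : Finset Site} (η η' : Config Λ) : ℝ :=
  commHeightSet U Δ1 Δ2 {η} {η'}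

/-- Stability level V_η = Φ(η, I_η) − H(η), where I_η = {ξ : H(ξ) < H(η)}. -/
noncomputable def stabLevel (U Δ1 Δ2 : ℝ) {Λ : Finset Site} (η : Config Λ) : ℝ :=
  commHeightSet U Δ1 Δ2 {η} {ξ : Config Λ | energy U Δ1 Δ2 ξ < energy U Δ1 Δ2 η}
    - energy U Δ1 Δ2 η

/-- The set of stable configurations (global minimizers of H). -/
def Xstab (U Δ1 Δ2 : ℝ) (Λ : Finset Site) : Set (Config Λ) :=
  {η | ∀ ξ : Config Λ, energy U Δ1 Δ2 η ≤ energy U Δ1 Δ2 ξ}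

/-- The set of metastable configurations (non-stable configurations of maximal
stability level). -/
def Xmeta (U Δ1 Δ2 : ℝ) (Λ : Finset Site) : Set (Config Λ) :=
  {η | η ∉ Xstab U Δ1 Δ2 Λ ∧
    ∀ ξ : Config Λ, ξ ∉ Xstab U Δ1 Δ2 Λ → stabLevel U Δ1 Δ2 ξ ≤ stabLevel U Δ1 Δ2 η}

/-- The empty configuration □. -/
def emptyConfig (Λ : Finset Site) : Config Λ := ⟨fun _ => 0, fun _ _ => rfl⟩

/-- The critical length ℓ* = ⌈Δ1/(4U − Δ1 − Δ2)⌉. -/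
noncomputable def lstar (U Δ1 Δ2 : ℝ) : ℤ := ⌈Δ1 / (4 * U - Δ1 - Δ2)⌉

/-- The box Λ: in dual coordinates u(x) = ((x1−x2)/2,(x1+x2)/2) the
(L+3/2)×(L+3/2) square centered at the origin, i.e. |x1−x2| ≤ L+1 and |x1+x2| ≤ L+1. -/
noncomputable def latBox (L : ℕ) : Finset Site :=
  (Finset.Icc (-(L : ℤ) - 1) ((L : ℤ) + 1) ×ˢ Finset.Icc (-(L : ℤ) - 1) ((L : ℤ) + 1)).filter
    (fun x => |x.1 - x.2| ≤ (L : ℤ) + 1 ∧ |x.1 + x.2| ≤ (L : ℤ) + 1)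

/-- The m×n dual rectangle of sites (in dual coordinates) with dual lower-left corner p
(in standard coordinates): sites p + i·(1,−1) + j·(1,1) for 0 ≤ i < m, 0 ≤ j < n.
All these sites have the same parity. -/
def dualRect (p : Site) (m n : ℕ) : Finset Site :=
  (Finset.range m ×ˢ Finset.range n).image
    (fun ij => ((p.1 + (ij.1 : ℤ) + (ij.2 : ℤ), p.2 + (ij.2 : ℤ) - (ij.1 : ℤ)) : Site))

/-- The sites adjacent to a set S but not in S. -/
def siteBorder (S : Finset Site) : Finset Site := S.biUnion nbrs \ S

/-- ⊞: the tb-tiled configurations whose particles of type 2 occupy an L×L square in dual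
coordinates filling Λ⁻ (type-2 sites in Λ⁻⁻, surrounding type-1 sites in Λ⁻); these are
the two largest checkerboard droplets (one of each parity). -/
def boxPlus (L : ℕ) : Set (Config (latBox L)) :=
  {η | ∃ p : Site,
      (∀ x, η.val x = 2 ↔ x ∈ dualRect p L L) ∧
      (∀ x, η.val x = 1 ↔ x ∈ siteBorder (dualRect p L L)) ∧
      dualRect p L L ⊆ inner2 (latBox L) ∧
      siteBorder (dualRect p L L) ⊆ inner1 (latBox L)}

/-- The active-bond relation between sites. -/
def bondRel {Λ : Finset Site} (η : Config Λ) (x y : Site) : Prop :=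
  x ∈ inner1 Λ ∧ y ∈ inner1 Λ ∧ adjacent x y ∧
  ((η.val x = 1 ∧ η.val y = 2) ∨ (η.val x = 2 ∧ η.val y = 1))

/-- C is a cluster of η: a maximal connected component of the occupied sites under the
active-bond relation. -/
def IsCluster {Λ : Finset Site} (η : Config Λ) (C : Finset Site) : Prop :=
  ∃ x : Site, η.val x ≠ 0 ∧ ∀ y : Site, y ∈ C ↔ Relation.ReflTransGen (bondRel η) x y

/-- The occupied sites of η form a single cluster. -/
def SingleCluster {Λ : Finset Site} (η : Config Λ) : Prop :=
  ∃ x : Site, η.val x ≠ 0 ∧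
    ∀ y : Site, η.val y ≠ 0 → Relation.ReflTransGen (bondRel η) x y

/-- Dual coordinates, renormalized to land in ℤ² (within a fixed parity class this maps
dual neighbours to adjacent cells). -/
def cellOf (x : Site) : Cell := ((x.1 - x.2).fdiv 2, (x.1 + x.2).fdiv 2)

/-- The sites of Λ occupied by particles of type 2. -/
def type2Sites {Λ : Finset Site} (η : Config Λ) : Finset Site :=
  Λ.filter (fun x => η.val x = 2)

/-- Tile support of a configuration: the polyomino in dual coordinates given by the unit
squares centered at the particles of type 2. -/
def tileSupport {Λ : Finset Site} (η : Config Λ) : Finset Cell :=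
  (type2Sites η).image cellOf

/- ----------  Polyominoes ---------- -/

/-- Perimeter of a polyomino (number of boundary edges, inner boundaries included). -/
def perim (A : Finset Cell) : ℕ :=
  A.sum (fun c => ((nbrs c).filter (fun d => d ∉ A)).card)

def adjIn (A : Finset Cell) (x y : Cell) : Prop := x ∈ A ∧ y ∈ A ∧ adjacent x y

/-- Connectedness of a polyomino. -/
def PolyConnected (A : Finset Cell) : Prop :=
  A.Nonempty ∧ ∀ x ∈ A, ∀ y ∈ A, Relation.ReflTransGen (adjIn A) x y

/-- Number of holes: bounded (= finite) connected components of the complement. -/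
noncomputable def numHoles (A : Finset Cell) : ℕ :=
  Set.ncard {C : Set Cell | ∃ d : Cell, d ∉ A ∧
    C = {e : Cell | Relation.ReflTransGen (fun u v => adjacent u v ∧ u ∉ A ∧ v ∉ A) d e} ∧
    C.Finite}

/-- The four cells having lattice point v as a corner. -/
def cellsAt (v : Cell) : Finset Cell :=
  {(v.1 - 1, v.2 - 1), (v.1 - 1, v.2), (v.1, v.2 - 1), v}

/-- The lattice points that are corners of cells of A. -/
def vertexSet (A : Finset Cell) : Finset Cell :=
  A.biUnion (fun c => {c, (c.1 + 1, c.2), (c.1, c.2 + 1), (c.1 + 1, c.2 + 1)})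

def occAt (A : Finset Cell) (v : Cell) : ℕ := ((cellsAt v).filter (fun c => c ∈ A)).card

/-- Number of convex corners ψ(A): vertices with exactly one incident occupied cell. -/
def convexCorners (A : Finset Cell) : ℕ :=
  (vertexSet A).sum (fun v => if occAt A v = 1 then 1 else 0)

/-- Number of concave corners φ(A): a vertex with three incident occupied cells counts
once, a vertex with two diagonally opposite occupied cells counts twice. -/
def concaveCorners (A : Finset Cell) : ℕ :=
  (vertexSet A).sum (fun v =>
    if occAt A v = 3 then 1
    else if occAt A v = 2 ∧ (((v.1 - 1, v.2 - 1) ∈ A ∧ v ∈ A) ∨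
          ((v.1 - 1, v.2) ∈ A ∧ (v.1, v.2 - 1) ∈ A)) then 2
    else 0)

/-- T(A) = 2P(A) + ψ(A) − φ(A). -/
def Tpoly (A : Finset Cell) : ℤ :=
  2 * (perim A : ℤ) + (convexCorners A : ℤ) - (concaveCorners A : ℤ)

/-- For connected polyominoes, T(A) = 2P(A) + 4 − 4Q(A). -/
noncomputable def Tconn (A : Finset Cell) : ℤ :=
  2 * (perim A : ℤ) + 4 - 4 * (numHoles A : ℤ)

/-- Width (number of columns) of the circumscribing rectangle. -/
def polyWidth (A : Finset Cell) : ℤ :=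
  (WithBot.unbotD 0 (A.image Prod.fst).max) - (WithTop.untopD 0 (A.image Prod.fst).min) + 1

/-- Height (number of rows) of the circumscribing rectangle. -/
def polyHeight (A : Finset Cell) : ℤ :=
  (WithBot.unbotD 0 (A.image Prod.snd).max) - (WithTop.untopD 0 (A.image Prod.snd).min) + 1

/-- A polyomino is monotone if its perimeter equals the perimeter of its circumscribing
rectangle. -/
def MonotonePoly (A : Finset Cell) : Prop :=
  (perim A : ℤ) = 2 * (polyWidth A + polyHeight A)

/-- The reference standard polyomino: an (l+ζ)×l rectangle (quasi-square, ζ ∈ {0,1})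
with a bar of length k attached to a longest side, starting at offset a. -/
def baseStd (l ζ a k : ℕ) : Finset Cell :=
  ((Finset.range (l + ζ)) ×ˢ (Finset.range l)).image
      (fun q => (((q.1 : ℤ), (q.2 : ℤ)) : Cell))
    ∪ (Finset.range k).image (fun i => ((((a + i : ℕ) : ℤ), (l : ℤ)) : Cell))

/-- The eight symmetries of the square lattice. -/
def dihedralMaps : List (Cell → Cell) :=
  [fun c => (c.1, c.2), fun c => (-c.1, c.2), fun c => (c.1, -c.2), fun c => (-c.1, -c.2),
   fun c => (c.2, c.1), fun c => (-c.2, c.1), fun c => (c.2, -c.1), fun c => (-c.2, -c.1)]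

/-- A standard polyomino: a quasi-square with possibly a bar attached to one of its
longest sides (up to lattice symmetries and translations). -/
def IsStandardPoly (A : Finset Cell) : Prop :=
  ∃ l ζ a k : ℕ, 1 ≤ l ∧ ζ ≤ 1 ∧ a + k ≤ l + ζ ∧
    ∃ f ∈ dihedralMaps, ∃ t : Cell,
      A = (baseStd l ζ a k).image (fun c => (((f c).1 + t.1, (f c).2 + t.2) : Cell))

/- ----------  tb-tiled configurations ---------- -/

/-- V_{*,k}: configurations with exactly k particles of type 2, all lying in Λ⁻⁻. -/
def VStar (Λ : Finset Site) (k : ℕ) : Set (Config Λ) :=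
  {η | numType2 η = k ∧ ∀ x, η.val x = 2 → x ∈ inner2 Λ}

/-- V_{*,k}^{4k}: configurations of V_{*,k} with exactly 4k active bonds and no isolated
particle of type 1 (the tb-tiled configurations with k particles of type 2). -/
def VTiled (Λ : Finset Site) (k : ℕ) : Set (Config Λ) :=
  {η | η ∈ VStar Λ k ∧ numBonds η = 4 * k ∧
    ∀ x, η.val x = 1 → ∃ y ∈ nbrs x, η.val y = 2}

/-- All particles of type 2 have the same (site) parity. -/
def SameParity2 {Λ : Finset Site} (η : Config Λ) : Prop :=
  ∀ x y : Site, η.val x = 2 → η.val y = 2 → (x.1 + x.2) % 2 = (y.1 + y.2) % 2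

/-- A standard configuration: tile support a standard polyomino (all type-2 particles of
one parity). -/
def IsStandardConfig {Λ : Finset Site} (η : Config Λ) : Prop :=
  SameParity2 η ∧ IsStandardPoly (tileSupport η)

/-- A tb-tiled configuration: at least one particle of type 2, every particle of type 2
saturated, no isolated particle of type 1. -/
def IsTbTiled {Λ : Finset Site} (η : Config Λ) : Prop :=
  (∃ x, η.val x = 2) ∧
  (∀ x, η.val x = 2 → ∀ y ∈ nbrs x, η.val y = 1) ∧
  (∀ x, η.val x = 1 → ∃ y ∈ nbrs x, η.val y = 2)

/-- η is the tb-tiled droplet with type-2 sites S: type-2 exactly on S, type-1 exactly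
on the border of S, empty elsewhere. -/
def IsTbDroplet {Λ : Finset Site} (η : Config Λ) (S : Finset Site) : Prop :=
  (∀ x, η.val x = 2 ↔ x ∈ S) ∧ (∀ x, η.val x = 1 ↔ x ∈ siteBorder S)

/- ----------  cluster-wise quantities ---------- -/

def numType1In {Λ : Finset Site} (η : Config Λ) (C : Finset Site) : ℕ :=
  (C.filter (fun x => η.val x = 1)).card

def numType2In {Λ : Finset Site} (η : Config Λ) (C : Finset Site) : ℕ :=
  (C.filter (fun x => η.val x = 2)).card

def numBondsIn {Λ : Finset Site} (η : Config Λ) (C : Finset Site) : ℕ :=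
  ((C ×ˢ C).filter (fun q => q.1 ∈ inner1 Λ ∧ q.2 ∈ inner1 Λ ∧ adjacent q.1 q.2 ∧
    η.val q.1 = 1 ∧ η.val q.2 = 2)).card

def tileSupportIn {Λ : Finset Site} (η : Config Λ) (C : Finset Site) : Finset Cell :=
  (C.filter (fun x => η.val x = 2)).image cellOf

/-- Number of active bonds incident to the site x. -/
def bondDeg {Λ : Finset Site} (η : Config Λ) (x : Site) : ℕ :=
  ((nbrs x).filter (fun y => x ∈ inner1 Λ ∧ y ∈ inner1 Λ ∧
    ((η.val x = 1 ∧ η.val y = 2) ∨ (η.val x = 2 ∧ η.val y = 1)))).card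

/-- Number of missing bonds of the type-1 particles of C. -/
def missingBonds {Λ : Finset Site} (η : Config Λ) (C : Finset Site) : ℤ :=
  ∑ x ∈ C.filter (fun x => η.val x = 1), (4 - (bondDeg η x : ℤ))

/- ----------  geometry for the energy-reduction mechanisms ---------- -/

/-- A site is lattice-connecting: there is a n.n. path of empty sites from it to ∂⁻Λ. -/
def LatticeConnecting {Λ : Finset Site} (η : Config Λ) (x : Site) : Prop :=
  ∃ l : List Site, List.Chain adjacent x l ∧
    (x :: l).getLast (List.cons_ne_nil x l) ∈ intBdry Λ ∧
    ∀ y ∈ l, y ∈ Λ ∧ η.val y = 0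

/-- A pending dimer (x,y): a lattice-connecting type-1 particle x whose unique active
bond is with the adjacent type-2 particle y, which has at most three active bonds. -/
def PendingDimer {Λ : Finset Site} (η : Config Λ) (x y : Site) : Prop :=
  bondRel η x y ∧ η.val x = 1 ∧ η.val y = 2 ∧ LatticeConnecting η x ∧
  bondDeg η x = 1 ∧ bondDeg η y ≤ 3

/-- The sites of a horizontal (in dual coordinates) beam of length l: l+1 particles of
type 1 at mutual dual distance 1, with left-most site p. -/
def beamSites (p : Site) (l : ℕ) : Finset Site :=
  (Finset.range (l + 1)).image (fun i : ℕ => ((p.1 + (i : ℤ), p.2 - (i : ℤ)) : Site))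

/-- The center row of the (south) support of the beam. -/
def centerSites (p : Site) (l : ℕ) : Finset Site :=
  (Finset.range l).image (fun i : ℕ => ((p.1 + (i : ℤ), p.2 - 1 - (i : ℤ)) : Site))

/-- The basement row of the (south) support of the beam. -/
def basementSites (p : Site) (l : ℕ) : Finset Site :=
  (Finset.range (l + 1)).image (fun i : ℕ => ((p.1 - 1 + (i : ℤ), p.2 - 1 - (i : ℤ)) : Site))

/-- The (south) support of a beam/bridge. -/
def bridgeSupport (p : Site) (l : ℕ) : Finset Site :=
  beamSites p l ∪ centerSites p l ∪ basementSites p l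

/-- The 12 sites of a slot: a 4×4 block minus its four corner sites; p is the lower-left
corner of the block. -/
def slotSites (p : Site) : Finset Site :=
  ((Finset.range 4 ×ˢ Finset.range 4).image
      (fun ij => ((p.1 + (ij.1 : ℤ), p.2 + (ij.2 : ℤ)) : Site))) \
    {(p.1, p.2), (p.1 + 3, p.2), (p.1, p.2 + 3), (p.1 + 3, p.2 + 3)}

/-- The slot-conjugate (diagonally opposite) ordered pairs of central sites of a slot. -/
def slotDiagPairs (p : Site) : List (Site × Site) :=
  [((p.1 + 1, p.2 + 1), (p.1 + 2, p.2 + 2)), ((p.1 + 2, p.2 + 2), (p.1 + 1, p.2 + 1)),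
   ((p.1 + 1, p.2 + 2), (p.1 + 2, p.2 + 1)), ((p.1 + 2, p.2 + 1), (p.1 + 1, p.2 + 2))]

/-- The type-2 sites of the bar added on side d (0 = north, 1 = south, 2 = east,
3 = west, in dual coordinates) of the m×n dual rectangle with corner p. -/
def sideBar (p : Site) (m n : ℕ) (d : Fin 4) : Finset Site :=
  if d = 0 then dualRect (p.1 + (n : ℤ), p.2 + (n : ℤ)) m 1
  else if d = 1 then dualRect (p.1 - 1, p.2 - 1) m 1
  else if d = 2 then dualRect (p.1 + (m : ℤ), p.2 - (m : ℤ)) 1 n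
  else dualRect (p.1 - 1, p.2 + 1) 1 n

/-- The length of side d of an m×n dual rectangle. -/
def sideLen (m n : ℕ) (d : Fin 4) : ℕ := if (d : ℕ) ≤ 1 then m else n

/-- The type-2 sites left after removing the outermost bar on side d of the m×n dual
rectangle with corner p. -/
def shrunkRect (p : Site) (m n : ℕ) (d : Fin 4) : Finset Site :=
  if d = 0 then dualRect p m (n - 1)
  else if d = 1 then dualRect (p.1 + 1, p.2 + 1) m (n - 1)
  else if d = 2 then dualRect p (m - 1) n
  else dualRect (p.1 + 1, p.2 - 1) (m - 1) n

/-!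
Let `S` be the set of particles of type 2 of `η`, `P` the number of ordered pairs of
neighbours inside `S`, `E` the number of pairs (type-2 particle, empty neighbour) and `I` the
number of particles of type 1 without a neighbour of type 2. Counting the four neighbours of
every site of `S` gives `B = 4|S| - P - E`, and every site of the outer border `∂S` carries a
particle of type 1 unless it is one of the `E` empty neighbours, so
`H(η) ≥ -4U|S| + Δ1 (|∂S| + P) + Δ2 |S| + (U - Δ1)(P + E) + Δ1 I`.

An isoperimetric inequality gives `|∂S| + P ≥ |S| + t + 1` with `4|S| ≤ t²`: split `S` by
parity; a set of one parity is, in dual coordinates, a polyomino whose neighbours are the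
vertices of its cells, and a polyomino `A` with `r` rows of at most `m` cells has at least
`|A| + r + m + 1` vertices. Conversely a quasi-square droplet of `|S|` sites, surrounded by
particles of type 1, fits in `Λ⁻⁻`, has `4|S|` bonds and at most `|S| + t + 1` particles of
type 1. Comparing `η` with it forces `P = E = I = 0`, which is tb-tiledness.
-/

lemma mem_nbrs_iff {x y : Site} :
    y ∈ nbrs x ↔ (y.1 - x.1).natAbs + (y.2 - x.2).natAbs = 1 := by
  simp only [nbrs, Finset.mem_insert, Finset.mem_singleton, Prod.ext_iff]
  omega

lemma mem_nbrs_comm {x y : Site} : y ∈ nbrs x ↔ x ∈ nbrs y := by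
  simp only [mem_nbrs_iff]
  omega

lemma adjacent_iff_mem_nbrs {x y : Site} : adjacent x y ↔ y ∈ nbrs x := by
  rw [adjacent, Int.abs_eq_natAbs, Int.abs_eq_natAbs, mem_nbrs_iff]
  omega

lemma parity_ne_of_mem_nbrs {x y : Site} (h : y ∈ nbrs x) :
    (y.1 + y.2) % 2 ≠ (x.1 + x.2) % 2 := by
  rw [mem_nbrs_iff] at h
  omega

lemma card_nbrs (x : Site) : (nbrs x).card = 4 := by
  rw [nbrs, Finset.card_insert_of_notMem, Finset.card_insert_of_notMem,
    Finset.card_insert_of_notMem, Finset.card_singleton] <;>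
    simp only [Finset.mem_insert, Finset.mem_singleton, Prod.ext_iff] <;> omega

lemma mem_inner1 {Λ : Finset Site} {x : Site} : x ∈ inner1 Λ ↔ x ∈ Λ ∧ nbrs x ⊆ Λ := by
  simp only [inner1, intBdry, Finset.mem_sdiff, Finset.mem_filter]
  tauto

lemma inner1_subset (Λ : Finset Site) : inner1 Λ ⊆ Λ := Finset.sdiff_subset

lemma inner2_subset_inner1 (Λ : Finset Site) : inner2 Λ ⊆ inner1 Λ := Finset.sdiff_subset

lemma nbrs_subset_inner1 {Λ : Finset Site} {x : Site} (hx : x ∈ inner2 Λ) :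
    nbrs x ⊆ inner1 Λ :=
  (mem_inner1.1 hx).2

lemma mem_latBox_of {L : ℕ} {x : Site} (h₁ : (x.1 - x.2).natAbs ≤ L + 1)
    (h₂ : (x.1 + x.2).natAbs ≤ L + 1) : x ∈ latBox L := by
  simp only [latBox, Finset.mem_filter, Finset.mem_product, Finset.mem_Icc, Int.abs_eq_natAbs]
  omega

lemma mem_inner1_latBox_of {L : ℕ} {x : Site} (h₁ : (x.1 - x.2).natAbs ≤ L)
    (h₂ : (x.1 + x.2).natAbs ≤ L) : x ∈ inner1 (latBox L) :=
  mem_inner1.2 ⟨mem_latBox_of (by omega) (by omega), fun y hy => by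
    rw [mem_nbrs_iff] at hy
    exact mem_latBox_of (by omega) (by omega)⟩

lemma mem_inner2_latBox_of {L : ℕ} {x : Site} (h₁ : (x.1 - x.2).natAbs < L)
    (h₂ : (x.1 + x.2).natAbs < L) : x ∈ inner2 (latBox L) :=
  mem_inner1.2 ⟨mem_inner1_latBox_of (by omega) (by omega), fun y hy => by
    rw [mem_nbrs_iff] at hy
    exact mem_inner1_latBox_of (by omega) (by omega)⟩

lemma Config.mem_of_val_ne_zero {Λ : Finset Site} (η : Config Λ) {x : Site} (h : η.val x ≠ 0) :
    x ∈ Λ := by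
  by_contra hx
  exact h (η.zero_outside x hx)

lemma mem_type2Sites {Λ : Finset Site} {η : Config Λ} {x : Site} :
    x ∈ type2Sites η ↔ η.val x = 2 := by
  refine ⟨fun h => (Finset.mem_filter.1 h).2, fun h => Finset.mem_filter.2 ⟨?_, h⟩⟩
  exact η.mem_of_val_ne_zero (by rw [h]; decide)

def numAdjPairs (S : Finset Site) : ℕ := ∑ x ∈ S, (nbrs x ∩ S).card

def numEmptyNbrs {Λ : Finset Site} (η : Config Λ) : ℕ :=
  ∑ x ∈ type2Sites η, ((nbrs x).filter (η.val · = 0)).card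

def isolatedType1 {Λ : Finset Site} (η : Config Λ) : Finset Site :=
  Λ.filter (fun x => η.val x = 1 ∧ ∀ y ∈ nbrs x, η.val y ≠ 2)

lemma Finset.card_eq_card_filter_zero_add_one_add_two {α : Type*} (s : Finset α) (v : α → Fin 3) :
    s.card = (s.filter (v · = 0)).card + (s.filter (v · = 1)).card + (s.filter (v · = 2)).card := by
  rw [Finset.card_eq_sum_card_fiberwise (f := v) (t := Finset.univ) (fun _ _ => by simp),
    Fin.sum_univ_three]

section Counting

variable {Λ : Finset Site} {η : Config Λ}

lemma numBonds_eq_sum (hη : ∀ x, η.val x = 2 → x ∈ inner2 Λ) :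
    numBonds η = ∑ x ∈ type2Sites η, ((nbrs x).filter (η.val · = 1)).card := by
  rw [numBonds, Finset.card_eq_sum_card_fiberwise (f := Prod.snd) (t := type2Sites η)
    (fun q hq => by simp_all [mem_type2Sites])]
  refine Finset.sum_congr rfl fun x hx => Finset.card_nbij' Prod.fst (·, x) ?_ ?_ ?_ ?_
  · intro q hq
    simp only [Finset.coe_filter, Set.mem_ofPred_eq, Finset.mem_filter, Finset.mem_product] at hq ⊢
    obtain ⟨⟨⟨-, -⟩, hadj, h1, -⟩, rfl⟩ := hq
    exact ⟨mem_nbrs_comm.1 (adjacent_iff_mem_nbrs.1 hadj), h1⟩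
  · intro y hy
    have hx2 := mem_type2Sites.1 hx
    simp only [Finset.coe_filter, Set.mem_ofPred_eq, Finset.mem_filter, Finset.mem_product] at hy ⊢
    exact ⟨⟨⟨nbrs_subset_inner1 (hη x hx2) hy.1, inner2_subset_inner1 Λ (hη x hx2)⟩,
      adjacent_iff_mem_nbrs.2 (mem_nbrs_comm.1 hy.1), hy.2, hx2⟩, trivial⟩
  · intro q hq
    simp only [Finset.coe_filter, Set.mem_ofPred_eq] at hq
    rw [← hq.2]
  · intro y _
    rfl

lemma numBonds_add_numAdjPairs_add_numEmptyNbrs (hη : ∀ x, η.val x = 2 → x ∈ inner2 Λ) :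
    numBonds η + numAdjPairs (type2Sites η) + numEmptyNbrs η = 4 * (type2Sites η).card := by
  rw [numBonds_eq_sum hη, numAdjPairs, numEmptyNbrs, ← Finset.sum_add_distrib,
    ← Finset.sum_add_distrib, mul_comm, ← smul_eq_mul, ← Finset.sum_const]
  refine Finset.sum_congr rfl fun x _ => ?_
  have h2 : (nbrs x).filter (η.val · = 2) = nbrs x ∩ type2Sites η := by
    ext y
    simp [mem_type2Sites]
  rw [← card_nbrs x, (nbrs x).card_eq_card_filter_zero_add_one_add_two η.val, h2]
  omega

lemma card_siteBorder_add_card_isolatedType1_le (η : Config Λ) :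
    (siteBorder (type2Sites η)).card + (isolatedType1 η).card ≤
      numType1 η + numEmptyNbrs η := by
  set S := type2Sites η
  have hsplit := (siteBorder S).card_eq_card_filter_zero_add_one_add_two η.val
  have h2 : (siteBorder S).filter (η.val · = 2) = ∅ := by
    refine Finset.filter_eq_empty_iff.2 fun y hy h => ?_
    exact (Finset.mem_sdiff.1 hy).2 (mem_type2Sites.2 h)
  have h0 : ((siteBorder S).filter (η.val · = 0)).card ≤ numEmptyNbrs η := by
    refine le_trans (Finset.card_le_card fun y hy => ?_) Finset.card_biUnion_le
    obtain ⟨hy, hy0⟩ := Finset.mem_filter.1 hy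
    obtain ⟨x, hx, hyx⟩ := Finset.mem_biUnion.1 (Finset.mem_sdiff.1 hy).1
    exact Finset.mem_biUnion.2 ⟨x, hx, Finset.mem_filter.2 ⟨hyx, hy0⟩⟩
  have h1 : ((siteBorder S).filter (η.val · = 1)).card + (isolatedType1 η).card ≤
      numType1 η := by
    rw [← Finset.card_union_of_disjoint]
    · refine Finset.card_le_card (Finset.union_subset (fun y hy => ?_) fun y hy => ?_)
      · have h1 := (Finset.mem_filter.1 hy).2
        exact Finset.mem_filter.2 ⟨η.mem_of_val_ne_zero (by rw [h1]; decide), h1⟩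
      · obtain ⟨hyΛ, h1, -⟩ := Finset.mem_filter.1 hy
        exact Finset.mem_filter.2 ⟨hyΛ, h1⟩
    · refine Finset.disjoint_left.2 fun y hy hiso => ?_
      obtain ⟨x, hx, hyx⟩ := Finset.mem_biUnion.1 (Finset.mem_sdiff.1 (Finset.mem_filter.1 hy).1).1
      exact (Finset.mem_filter.1 hiso).2.2 x (mem_nbrs_comm.1 hyx) (mem_type2Sites.1 hx)
  rw [h2, Finset.card_empty] at hsplit
  omega

lemma card_isolatedType1_eq_zero_iff :
    (isolatedType1 η).card = 0 ↔ ∀ x, η.val x = 1 → ∃ y ∈ nbrs x, η.val y = 2 := by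
  simp only [Finset.card_eq_zero, isolatedType1, Finset.filter_eq_empty_iff, not_and, not_forall,
    not_not, exists_prop]
  exact ⟨fun h x hx => h (η.mem_of_val_ne_zero (by rw [hx]; decide)) hx, fun h x _ => h x⟩

lemma le_energy {U Δ1 Δ2 : ℝ} (hΔ1 : 0 ≤ Δ1) (hη : ∀ x, η.val x = 2 → x ∈ inner2 Λ) :
    -4 * U * (type2Sites η).card +
        Δ1 * ((siteBorder (type2Sites η)).card + numAdjPairs (type2Sites η)) +
        Δ2 * (type2Sites η).card +
        (U - Δ1) * (numAdjPairs (type2Sites η) + numEmptyNbrs η) +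
        Δ1 * (isolatedType1 η).card ≤
      energy U Δ1 Δ2 η := by
  have hB : (numBonds η : ℝ) + numAdjPairs (type2Sites η) + numEmptyNbrs η =
      4 * (type2Sites η).card := by
    exact_mod_cast numBonds_add_numAdjPairs_add_numEmptyNbrs hη
  have h1 : ((siteBorder (type2Sites η)).card : ℝ) + (isolatedType1 η).card ≤
      numType1 η + numEmptyNbrs η := by
    exact_mod_cast card_siteBorder_add_card_isolatedType1_le η
  have h2 : numType2 η = (type2Sites η).card := rfl
  rw [energy, h2, show (numBonds η : ℝ) = 4 * (type2Sites η).card -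
    numAdjPairs (type2Sites η) - numEmptyNbrs η by linarith]
  linarith [mul_le_mul_of_nonneg_left h1 hΔ1]

end Counting

section TbDroplet

variable {Λ : Finset Site} {D : Finset Site}

lemma siteBorder_subset_inner1 (hD : D ⊆ inner2 Λ) : siteBorder D ⊆ inner1 Λ := by
  intro y hy
  obtain ⟨x, hx, hyx⟩ := Finset.mem_biUnion.1 (Finset.mem_sdiff.1 hy).1
  exact nbrs_subset_inner1 (hD hx) hyx

def tbDroplet (D : Finset Site) (hD : D ⊆ inner2 Λ) : Config Λ where
  val x := if x ∈ D then 2 else if x ∈ siteBorder D then 1 else 0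
  zero_outside x hx := by
    have hxD : x ∉ D := fun h => hx (inner1_subset Λ (inner2_subset_inner1 Λ (hD h)))
    have hxB : x ∉ siteBorder D := fun h => hx (inner1_subset Λ (siteBorder_subset_inner1 hD h))
    simp [hxD, hxB]

lemma tbDroplet_val_eq_two (hD : D ⊆ inner2 Λ) {x : Site} :
    (tbDroplet D hD).val x = 2 ↔ x ∈ D := by
  by_cases hx : x ∈ D <;> by_cases hb : x ∈ siteBorder D <;> simp [tbDroplet, hx, hb]

lemma tbDroplet_val_eq_one (hD : D ⊆ inner2 Λ) {x : Site} :
    (tbDroplet D hD).val x = 1 ↔ x ∈ siteBorder D := by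
  by_cases hx : x ∈ D
  · have hb : x ∉ siteBorder D := fun h => (Finset.mem_sdiff.1 h).2 hx
    simp [tbDroplet, hx, hb]
  · by_cases hb : x ∈ siteBorder D <;> simp [tbDroplet, hx, hb]

lemma type2Sites_tbDroplet (hD : D ⊆ inner2 Λ) : type2Sites (tbDroplet D hD) = D := by
  ext x
  rw [mem_type2Sites, tbDroplet_val_eq_two]

lemma tbDroplet_mem_VStar (hD : D ⊆ inner2 Λ) : tbDroplet D hD ∈ VStar Λ D.card :=
  ⟨congrArg Finset.card (type2Sites_tbDroplet hD), fun _ hx => hD ((tbDroplet_val_eq_two hD).1 hx)⟩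

lemma numType1_tbDroplet (hD : D ⊆ inner2 Λ) :
    numType1 (tbDroplet D hD) = (siteBorder D).card := by
  refine congrArg Finset.card (Finset.ext fun x => ?_)
  rw [Finset.mem_filter, tbDroplet_val_eq_one]
  exact ⟨And.right, fun h => ⟨inner1_subset Λ (siteBorder_subset_inner1 hD h), h⟩⟩

lemma numEmptyNbrs_tbDroplet (hD : D ⊆ inner2 Λ) : numEmptyNbrs (tbDroplet D hD) = 0 := by
  refine Finset.sum_eq_zero fun x hx => Finset.card_eq_zero.2 <|
    Finset.filter_eq_empty_iff.2 fun y hy h0 => ?_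
  rw [type2Sites_tbDroplet] at hx
  by_cases hyD : y ∈ D
  · rw [(tbDroplet_val_eq_two hD).2 hyD] at h0
    exact absurd h0 (by decide)
  · have hb : y ∈ siteBorder D := Finset.mem_sdiff.2 ⟨Finset.mem_biUnion.2 ⟨x, hx, hy⟩, hyD⟩
    rw [(tbDroplet_val_eq_one hD).2 hb] at h0
    exact absurd h0 (by decide)

lemma energy_tbDroplet (U Δ1 Δ2 : ℝ) (hD : D ⊆ inner2 Λ) (hP : numAdjPairs D = 0) :
    energy U Δ1 Δ2 (tbDroplet D hD) =
      -4 * U * D.card + Δ1 * (siteBorder D).card + Δ2 * D.card := by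
  have hB := numBonds_add_numAdjPairs_add_numEmptyNbrs (η := tbDroplet D hD)
    fun x hx => hD ((tbDroplet_val_eq_two hD).1 hx)
  rw [type2Sites_tbDroplet, hP, numEmptyNbrs_tbDroplet] at hB
  have h2 : numType2 (tbDroplet D hD) = D.card := congrArg Finset.card (type2Sites_tbDroplet hD)
  rw [energy, numType1_tbDroplet, h2, show numBonds (tbDroplet D hD) = 4 * D.card by omega]
  push_cast
  ring

end TbDroplet

section Isoperimetry

lemma card_biUnion_nbrs_le (S : Finset Site) :
    (S.biUnion nbrs).card ≤ (siteBorder S).card + numAdjPairs S := by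
  rw [← Finset.card_sdiff_add_card_inter (S.biUnion nbrs) S, Finset.biUnion_inter]
  exact Nat.add_le_add_left Finset.card_biUnion_le _

lemma numAdjPairs_eq_zero {S : Finset Site} {p : ℤ} (hS : ∀ x ∈ S, (x.1 + x.2) % 2 = p) :
    numAdjPairs S = 0 := by
  refine Finset.sum_eq_zero fun x hx => Finset.card_eq_zero.2 <|
    Finset.eq_empty_of_forall_notMem fun y hy => ?_
  obtain ⟨hyx, hyS⟩ := Finset.mem_inter.1 hy
  exact parity_ne_of_mem_nbrs hyx ((hS y hyS).trans (hS x hx).symm)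

lemma Finset.card_filter_le_add_card_filter_ge {α β : Type*} [DecidableEq α] [LinearOrder β]
    (s : Finset α) (f : α → β) (b : β) :
    (s.filter (f · ≤ b)).card + (s.filter (b ≤ f ·)).card =
      s.card + (s.filter (f · = b)).card := by
  rw [← Finset.card_union_add_card_inter, ← Finset.filter_or, ← Finset.filter_and,
    Finset.filter_true_of_mem fun a _ => le_total (f a) b]
  congr 2
  exact Finset.filter_congr fun a _ => le_antisymm_iff.symm

def bottomVertices (C : Finset Cell) : Finset Cell := C ∪ C.image (fun c => (c.1 + 1, c.2))

/-- Each row of `C` has a rightmost cell, whose right neighbour is not in `C`. -/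
lemma card_add_card_image_snd_le (C : Finset Cell) :
    C.card + (C.image Prod.snd).card ≤ (bottomVertices C).card := by
  set E := C.filter (fun c => (c.1 + 1, c.2) ∉ C)
  have hrows : (C.image Prod.snd).card ≤ E.card := by
    refine le_trans (Finset.card_le_card fun y hy => ?_)
      (Finset.card_image_le (s := E) (f := Prod.snd))
    obtain ⟨c, hc, rfl⟩ := Finset.mem_image.1 hy
    obtain ⟨d, hd, hmax⟩ := Finset.exists_max_image (C.filter (·.2 = c.2)) Prod.fst
      ⟨c, Finset.mem_filter.2 ⟨hc, rfl⟩⟩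
    obtain ⟨hdC, hd2⟩ := Finset.mem_filter.1 hd
    refine Finset.mem_image.2 ⟨d, Finset.mem_filter.2 ⟨hdC, fun h => ?_⟩, hd2⟩
    have := hmax _ (Finset.mem_filter.2 ⟨h, hd2⟩)
    omega
  have hends : E.card ≤ (bottomVertices C \ C).card := by
    rw [← Finset.card_image_of_injective E (f := fun c : Cell => (c.1 + 1, c.2))
      fun a b h => by simpa [Prod.ext_iff] using h]
    refine Finset.card_le_card fun v hv => ?_
    obtain ⟨c, hc, rfl⟩ := Finset.mem_image.1 hv
    obtain ⟨hcC, hnot⟩ := Finset.mem_filter.1 hc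
    exact Finset.mem_sdiff.2 ⟨Finset.mem_union_right _ (Finset.mem_image_of_mem _ hcC), hnot⟩
  have := Finset.card_sdiff_add_card_eq_card (Finset.subset_union_left (s₁ := C)
    (s₂ := C.image (fun c : Cell => (c.1 + 1, c.2))))
  rw [← bottomVertices] at this
  omega

/-- The bottom vertices of the rows up to `b` and the top vertices of the rows from `b` on are
disjoint. -/
lemma card_bottomVertices_add_card_bottomVertices_le (C : Finset Cell) (b : ℤ) :
    (bottomVertices (C.filter (·.2 ≤ b))).card + (bottomVertices (C.filter (b ≤ ·.2))).card ≤
      (vertexSet C).card := by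
  set up : Cell → Cell := fun c => (c.1, c.2 + 1)
  have hup : ((bottomVertices (C.filter (b ≤ ·.2))).image up).card =
      (bottomVertices (C.filter (b ≤ ·.2))).card :=
    Finset.card_image_of_injective _ fun a b h => by simpa [up, Prod.ext_iff] using h
  rw [← hup, ← Finset.card_union_of_disjoint]
  · refine Finset.card_le_card fun v hv => ?_
    have hcorner : ∀ c ∈ C, ∀ v ∈ ({c, (c.1 + 1, c.2), (c.1, c.2 + 1), (c.1 + 1, c.2 + 1)} :
        Finset Cell), v ∈ vertexSet C := fun c hc v hv => Finset.mem_biUnion.2 ⟨c, hc, hv⟩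
    simp only [bottomVertices, Finset.mem_union, Finset.mem_image] at hv
    rcases hv with (hv | ⟨c, hc, rfl⟩) | ⟨c, hc | ⟨d, hd, rfl⟩, rfl⟩
    · exact hcorner v (Finset.mem_filter.1 hv).1 v (by simp)
    · exact hcorner c (Finset.mem_filter.1 hc).1 _ (by simp)
    · exact hcorner c (Finset.mem_filter.1 hc).1 _ (by simp [up])
    · exact hcorner d (Finset.mem_filter.1 hd).1 _ (by simp [up])
  · refine Finset.disjoint_left.2 fun v hv hv' => ?_
    simp only [bottomVertices, Finset.mem_union, Finset.mem_image, Finset.mem_filter] at hv hv'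
    rcases hv' with ⟨c, ⟨-, hc⟩ | ⟨d, ⟨-, hd⟩, rfl⟩, rfl⟩ <;>
      rcases hv with ⟨-, hv⟩ | ⟨e, ⟨-, he⟩, hev⟩ <;> simp only [up, Prod.ext_iff] at * <;> omega

/-- Split `C` at a fullest row: each half has one bottom vertex more per row than it has
cells. -/
lemma exists_sq_le_card_vertexSet {C : Finset Cell} (hC : C.Nonempty) :
    ∃ t, 4 * C.card ≤ t * t ∧ C.card + t + 1 ≤ (vertexSet C).card := by
  set R := C.image Prod.snd
  obtain ⟨b, hbR, hmax⟩ :=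
    Finset.exists_max_image R (fun y => (C.filter (·.2 = y)).card) (hC.image _)
  set m := (C.filter (·.2 = b)).card
  have hCm : C.card ≤ m * R.card := Finset.card_le_mul_card_image C m hmax
  have hcells := C.card_filter_le_add_card_filter_ge Prod.snd b
  have hrows : ((C.filter (·.2 ≤ b)).image Prod.snd).card +
      ((C.filter (b ≤ ·.2)).image Prod.snd).card = R.card + 1 := by
    have h := R.card_filter_le_add_card_filter_ge id b
    simp only [id, Finset.filter_eq', hbR, if_true, Finset.card_singleton] at h
    rwa [Finset.filter_image, Finset.filter_image] at h
  have hlo := card_add_card_image_snd_le (C.filter (·.2 ≤ b))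
  have hhi := card_add_card_image_snd_le (C.filter (b ≤ ·.2))
  have hV := card_bottomVertices_add_card_bottomVertices_le C b
  refine ⟨m + R.card, ?_, by omega⟩
  have := four_mul_le_sq_add m R.card
  rw [sq] at this
  nlinarith

lemma cellOf_eq (x : Site) : cellOf x = ((x.1 - x.2) / 2, (x.1 + x.2) / 2) := by
  simp [cellOf, Int.fdiv_eq_ediv]

lemma eq_of_cellOf_eq {x y : Site} (hxy : (x.1 + x.2) % 2 = (y.1 + y.2) % 2)
    (h : cellOf x = cellOf y) : x = y := by
  rw [cellOf_eq, cellOf_eq, Prod.ext_iff] at h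
  ext <;> omega

lemma image_cellOf_nbrs {x : Site} (hx : (x.1 + x.2) % 2 = 1) :
    (nbrs x).image cellOf = {cellOf x, ((cellOf x).1 + 1, (cellOf x).2),
      ((cellOf x).1, (cellOf x).2 + 1), ((cellOf x).1 + 1, (cellOf x).2 + 1)} := by
  simp only [nbrs, Finset.image_insert, Finset.image_singleton, cellOf_eq]
  ext c
  simp only [Finset.mem_insert, Finset.mem_singleton, Prod.ext_iff]
  omega

lemma card_biUnion_nbrs_eq_card_vertexSet {A : Finset Site}
    (hA : ∀ x ∈ A, (x.1 + x.2) % 2 = 1) :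
    (A.biUnion nbrs).card = (vertexSet (A.image cellOf)).card := by
  have hpar : ∀ y ∈ A.biUnion nbrs, (y.1 + y.2) % 2 = 0 := by
    intro y hy
    obtain ⟨x, hx, hyx⟩ := Finset.mem_biUnion.1 hy
    have := parity_ne_of_mem_nbrs hyx
    have := hA x hx
    omega
  rw [← Finset.card_image_of_injOn (f := cellOf) fun y hy z hz =>
      eq_of_cellOf_eq ((hpar y hy).trans (hpar z hz).symm),
    Finset.biUnion_image, vertexSet, Finset.image_biUnion]
  exact congrArg Finset.card (Finset.biUnion_congr rfl fun x hx => image_cellOf_nbrs (hA x hx))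

lemma nbrs_translate (x : Site) (a b : ℤ) :
    nbrs (x.1 + a, x.2 + b) = (nbrs x).image (fun y => (y.1 + a, y.2 + b)) := by
  simp only [nbrs, Finset.image_insert, Finset.image_singleton]
  ring_nf

lemma exists_sq_le_card_biUnion_nbrs_of_odd {A : Finset Site} (hA : A.Nonempty)
    (hodd : ∀ x ∈ A, (x.1 + x.2) % 2 = 1) :
    ∃ t, 4 * A.card ≤ t * t ∧ A.card + t + 1 ≤ (A.biUnion nbrs).card := by
  have hcard : (A.image cellOf).card = A.card := Finset.card_image_of_injOn fun x hx y hy =>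
    eq_of_cellOf_eq ((hodd x hx).trans (hodd y hy).symm)
  rw [card_biUnion_nbrs_eq_card_vertexSet hodd, ← hcard]
  exact exists_sq_le_card_vertexSet (hA.image _)

lemma exists_sq_le_card_biUnion_nbrs {A : Finset Site} (hA : A.Nonempty) {p : ℤ}
    (hp : ∀ x ∈ A, (x.1 + x.2) % 2 = p) :
    ∃ t, 4 * A.card ≤ t * t ∧ A.card + t + 1 ≤ (A.biUnion nbrs).card := by
  obtain ⟨x₀, hx₀⟩ := hA
  by_cases hodd : p = 1
  · exact exists_sq_le_card_biUnion_nbrs_of_odd ⟨x₀, hx₀⟩ (hodd ▸ hp)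
  set τ : Site → Site := fun x => (x.1 + 1, x.2 + 0)
  have hτ : Function.Injective τ := fun x y h => by simpa [τ, Prod.ext_iff] using h
  have hA' : (A.image τ).biUnion nbrs = (A.biUnion nbrs).image τ := by
    rw [Finset.image_biUnion, Finset.biUnion_image]
    exact Finset.biUnion_congr rfl fun x _ => nbrs_translate x 1 0
  have := exists_sq_le_card_biUnion_nbrs_of_odd ⟨τ x₀, Finset.mem_image_of_mem τ hx₀⟩
    fun y hy => by
      obtain ⟨x, hx, rfl⟩ := Finset.mem_image.1 hy
      have := hp x hx
      simp only [τ]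
      omega
  rwa [hA', Finset.card_image_of_injective _ hτ, Finset.card_image_of_injective _ hτ] at this

lemma card_biUnion_nbrs_even_add_odd_le (S : Finset Site) :
    ((S.filter (fun x => (x.1 + x.2) % 2 = 0)).biUnion nbrs).card +
        ((S.filter (fun x => ¬ (x.1 + x.2) % 2 = 0)).biUnion nbrs).card ≤
      (siteBorder S).card + numAdjPairs S := by
  rw [← Finset.card_union_of_disjoint, ← Finset.union_biUnion, Finset.filter_union_filter_not_eq]
  · exact card_biUnion_nbrs_le S
  refine Finset.disjoint_left.2 fun y hyA hyB => ?_
  obtain ⟨x, hx, hyx⟩ := Finset.mem_biUnion.1 hyA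
  obtain ⟨z, hz, hyz⟩ := Finset.mem_biUnion.1 hyB
  have := parity_ne_of_mem_nbrs hyx
  have := parity_ne_of_mem_nbrs hyz
  have := (Finset.mem_filter.1 hx).2
  have := (Finset.mem_filter.1 hz).2
  omega

theorem exists_sq_le_card_siteBorder_add_numAdjPairs {S : Finset Site} (hS : S.Nonempty) :
    ∃ t, 4 * S.card ≤ t * t ∧ S.card + t + 1 ≤ (siteBorder S).card + numAdjPairs S := by
  have hN := card_biUnion_nbrs_even_add_odd_le S
  set A := S.filter (fun x => (x.1 + x.2) % 2 = 0)
  set B := S.filter (fun x => ¬ (x.1 + x.2) % 2 = 0)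
  have hAB : A.card + B.card = S.card := Finset.card_filter_add_card_filter_not _
  have hApar : ∀ x ∈ A, (x.1 + x.2) % 2 = 0 := fun x hx => (Finset.mem_filter.1 hx).2
  have hBpar : ∀ x ∈ B, (x.1 + x.2) % 2 = 1 := fun x hx => by
    have := (Finset.mem_filter.1 hx).2
    omega
  rcases A.eq_empty_or_nonempty with hA | hA
  · rw [hA, Finset.card_empty] at hAB
    rw [hA, Finset.biUnion_empty, Finset.card_empty] at hN
    obtain ⟨t, ht, htN⟩ := exists_sq_le_card_biUnion_nbrs
      (Finset.card_pos.1 (by have := hS.card_pos; omega)) hBpar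
    exact ⟨t, by omega, by omega⟩
  rcases B.eq_empty_or_nonempty with hB | hB
  · rw [hB, Finset.card_empty] at hAB
    rw [hB, Finset.biUnion_empty, Finset.card_empty] at hN
    obtain ⟨t, ht, htN⟩ := exists_sq_le_card_biUnion_nbrs hA hApar
    exact ⟨t, by omega, by omega⟩
  obtain ⟨t₁, ht₁, htN₁⟩ := exists_sq_le_card_biUnion_nbrs hA hApar
  obtain ⟨t₂, ht₂, htN₂⟩ := exists_sq_le_card_biUnion_nbrs hB hBpar
  exact ⟨t₁ + t₂ + 1, by nlinarith, by omega⟩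

end Isoperimetry

section Droplet

/-- Site `n` has dual coordinates `(n % w, n / w)` relative to the corner `p`. -/
def stripDroplet (p : Site) (w k : ℕ) : Finset Site :=
  (Finset.range k).image fun n =>
    (p.1 + (n % w : ℕ) + (n / w : ℕ), p.2 + (n / w : ℕ) - (n % w : ℕ))

lemma card_stripDroplet (p : Site) (w k : ℕ) : (stripDroplet p w k).card = k := by
  rw [stripDroplet, Finset.card_image_of_injOn, Finset.card_range]
  intro m _ n _ h
  simp only [Prod.ext_iff] at h
  have h₁ : m % w = n % w := by omega
  have h₂ : m / w = n / w := by omega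
  rw [← Nat.mod_add_div m w, ← Nat.mod_add_div n w, h₁, h₂]

lemma stripDroplet_parity (p : Site) (w k : ℕ) :
    ∀ x ∈ stripDroplet p w k, (x.1 + x.2) % 2 = (p.1 + p.2) % 2 := by
  intro x hx
  obtain ⟨n, -, rfl⟩ := Finset.mem_image.1 hx
  omega

/-- The neighbours of the strip droplet are vertices of its `(w + 1)`-wide dual grid whose
row-major index is less than `k + w + h + 1`. -/
lemma card_biUnion_nbrs_stripDroplet_le (p : Site) {w h k : ℕ} (hk : k ≤ w * h) :
    ((stripDroplet p w k).biUnion nbrs).card ≤ k + w + h + 1 := by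
  set vertex : ℕ → Site := fun m =>
    (p.1 - 1 + (m % (w + 1) : ℕ) + (m / (w + 1) : ℕ), p.2 + (m / (w + 1) : ℕ) - (m % (w + 1) : ℕ))
  have hdecode : ∀ a b : ℕ, a ≤ w → vertex (a + (w + 1) * b) = (p.1 - 1 + a + b, p.2 + b - a) := by
    intro a b ha
    simp only [vertex, Nat.add_mul_mod_self_left, Nat.add_mul_div_left _ _ (Nat.succ_pos w),
      Nat.mod_eq_of_lt (Nat.lt_succ_of_le ha), Nat.div_eq_of_lt (Nat.lt_succ_of_le ha), zero_add]
  refine le_trans (Finset.card_le_card (t := (Finset.range (k + w + h + 1)).image vertex) ?_)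
    (Finset.card_image_le.trans (Finset.card_range _).le)
  intro y hy
  obtain ⟨x, hx, hyx⟩ := Finset.mem_biUnion.1 hy
  obtain ⟨n, hn, rfl⟩ := Finset.mem_image.1 hx
  rw [Finset.mem_range] at hn
  have hw : 0 < w := Nat.pos_of_ne_zero fun h0 => by rw [h0, zero_mul] at hk; omega
  have hi : n % w < w := Nat.mod_lt n hw
  have hj : n / w < h := Nat.div_lt_of_lt_mul (hn.trans_le hk)
  have hn' := Nat.mod_add_div n w
  have hvertex : ∀ a b : ℕ, a ≤ n % w + 1 → b ≤ n / w + 1 →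
      y = (p.1 - 1 + a + b, p.2 + b - a) → y ∈ (Finset.range (k + w + h + 1)).image vertex := by
    intro a b ha hb rfl
    refine Finset.mem_image.2 ⟨a + (w + 1) * b, Finset.mem_range.2 ?_, hdecode a b (by omega)⟩
    have : (w + 1) * b ≤ (w + 1) * (n / w + 1) := Nat.mul_le_mul_left _ hb
    nlinarith
  simp only [nbrs, Finset.mem_insert, Finset.mem_singleton] at hyx
  rcases hyx with rfl | rfl | rfl | rfl
  · exact hvertex (n % w + 1) (n / w + 1) le_rfl le_rfl (by ext <;> push_cast <;> ring)
  · exact hvertex (n % w) (n / w) (by omega) (by omega) (by ext <;> push_cast <;> ring)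
  · exact hvertex (n % w) (n / w + 1) (by omega) le_rfl (by ext <;> push_cast <;> ring)
  · exact hvertex (n % w + 1) (n / w) le_rfl (by omega) (by ext <;> push_cast <;> ring)

lemma stripDroplet_subset_inner2 {L w k : ℕ} (hw : w ≤ L) (hk : k ≤ w * L) :
    stripDroplet (1 - L, 0) w k ⊆ inner2 (latBox L) := by
  intro x hx
  obtain ⟨n, hn, rfl⟩ := Finset.mem_image.1 hx
  rw [Finset.mem_range] at hn
  have hw0 : 0 < w := Nat.pos_of_ne_zero fun h0 => by rw [h0, zero_mul] at hk; omega
  have hi : n % w < w := Nat.mod_lt n hw0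
  have hj : n / w < L := Nat.div_lt_of_lt_mul (by omega)
  generalize n % w = i at hi
  generalize n / w = j at hj
  exact mem_inner2_latBox_of (by dsimp only; omega) (by dsimp only; omega)

/-- The droplet is a quasi-square: `⌈t/2⌉` sites wide and at most `⌊t/2⌋` rows high. -/
lemma exists_droplet_of_sq_le {L k t : ℕ} (htL : t ≤ 2 * L) (hkt : 4 * k ≤ t * t) :
    ∃ D ⊆ inner2 (latBox L), D.card = k ∧ numAdjPairs D = 0 ∧
      (siteBorder D).card ≤ k + t + 1 := by
  have hwh : k ≤ (t - t / 2) * (t / 2) := by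
    rcases Nat.even_or_odd' t with ⟨s, rfl | rfl⟩
    · rw [show 2 * s - 2 * s / 2 = s by omega, show 2 * s / 2 = s by omega]
      nlinarith
    · rw [show 2 * s + 1 - (2 * s + 1) / 2 = s + 1 by omega, show (2 * s + 1) / 2 = s by omega]
      nlinarith
  refine ⟨stripDroplet (1 - L, 0) (t - t / 2) k,
    stripDroplet_subset_inner2 (by omega) (hwh.trans (Nat.mul_le_mul_left _ (by omega))),
    card_stripDroplet _ _ _, numAdjPairs_eq_zero (stripDroplet_parity _ _ _), ?_⟩
  calc (siteBorder _).card ≤ ((stripDroplet (1 - L, 0) (t - t / 2) k).biUnion nbrs).card :=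
        Finset.card_le_card Finset.sdiff_subset
    _ ≤ k + (t - t / 2) + t / 2 + 1 := card_biUnion_nbrs_stripDroplet_le _ hwh
    _ = k + t + 1 := by omega

theorem exists_droplet_card_siteBorder_le {L : ℕ} (S : Finset Site) (hS : S.card ≤ L ^ 2) :
    ∃ D ⊆ inner2 (latBox L), D.card = S.card ∧ numAdjPairs D = 0 ∧
      (siteBorder D).card ≤ (siteBorder S).card + numAdjPairs S := by
  rcases S.eq_empty_or_nonempty with rfl | hne
  · exact ⟨∅, Finset.empty_subset _, rfl, by simp [numAdjPairs], by simp [siteBorder]⟩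
  obtain ⟨t, ht, htS⟩ := exists_sq_le_card_siteBorder_add_numAdjPairs hne
  obtain ⟨D, hD, hDk, hDP, hDb⟩ := exists_droplet_of_sq_le (L := L) (k := S.card)
    (min_le_right t (2 * L)) (by
      rcases min_cases t (2 * L) with ⟨h, -⟩ | ⟨h, -⟩ <;> rw [h]
      · exact ht
      · nlinarith)
  exact ⟨D, hD, hDk, hDP, by have := min_le_left t (2 * L); omega⟩

end Droplet

lemma eq_zero_of_mul_add_mul_nonpos {α β : ℝ} {a b : ℕ} (hα : 0 < α) (hβ : 0 < β)
    (h : α * a + β * b ≤ 0) : a = 0 ∧ b = 0 := by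
  have ha := mul_nonneg hα.le (Nat.cast_nonneg (α := ℝ) a)
  have hb := mul_nonneg hβ.le (Nat.cast_nonneg (α := ℝ) b)
  refine ⟨Nat.eq_zero_of_not_pos fun h0 => ?_, Nat.eq_zero_of_not_pos fun h0 => ?_⟩
  · linarith [mul_pos hα (Nat.cast_pos.2 h0 : (0 : ℝ) < a)]
  · linarith [mul_pos hβ (Nat.cast_pos.2 h0 : (0 : ℝ) < b)]

theorem minimal_energy_configurations_are_tb_tiled_general
    (U Δ1 Δ2 : ℝ) (hΔ1 : 0 < Δ1) (hΔ1U : Δ1 < U)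
    (L : ℕ)
    (k : ℕ) (hk : k ≤ L ^ 2)
    (η : Config (latBox L)) (hη : η ∈ VStar (latBox L) k)
    (hmin : ∀ ξ ∈ VStar (latBox L) k, energy U Δ1 Δ2 η ≤ energy U Δ1 Δ2 ξ) :
    η ∈ VTiled (latBox L) k := by
  obtain ⟨hk2, hin⟩ := hη
  have hS : (type2Sites η).card = k := hk2
  obtain ⟨D, hD, hDS, hDP, hDb⟩ :=
    exists_droplet_card_siteBorder_le (L := L) (type2Sites η) (hS ▸ hk)
  have hcomp := hmin (tbDroplet D hD) (hDS.trans hS ▸ tbDroplet_mem_VStar hD)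
  rw [energy_tbDroplet U Δ1 Δ2 hD hDP, hDS] at hcomp
  have hDb' : ((siteBorder D).card : ℝ) ≤
      (siteBorder (type2Sites η)).card + numAdjPairs (type2Sites η) := by
    exact_mod_cast hDb
  obtain ⟨hPE, hI⟩ := eq_zero_of_mul_add_mul_nonpos
    (a := numAdjPairs (type2Sites η) + numEmptyNbrs η) (b := (isolatedType1 η).card)
    (sub_pos.2 hΔ1U) hΔ1 (by
      push_cast
      linarith [le_energy (U := U) (Δ2 := Δ2) hΔ1.le hin, mul_le_mul_of_nonneg_left hDb' hΔ1.le])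
  have hB := numBonds_add_numAdjPairs_add_numEmptyNbrs hin
  exact ⟨⟨hk2, hin⟩, by omega, card_isolatedType1_eq_zero_iff.1 hI⟩

/-- every minimizer of H over V_{*,n₂} (n₂ ≤ L²) is tb-tiled, i.e.,
belongs to V_{*,n₂}^{4n₂}. -/
theorem minimal_energy_configurations_are_tb_tiled
    (U Δ1 Δ2 : ℝ) (hU : 0 < U) (hΔ1 : 0 < Δ1) (hΔ1U : Δ1 < U)
    (hgap : 2 * U < Δ2 - Δ1) (hsum : Δ1 + Δ2 < 4 * U)
    (L : ℕ) (hL : 2 * lstar U Δ1 Δ2 < (L : ℤ))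
    (k : ℕ) (hk : k ≤ L ^ 2)
    (η : Config (latBox L)) (hη : η ∈ VStar (latBox L) k)
    (hmin : ∀ ξ ∈ VStar (latBox L) k, energy U Δ1 Δ2 η ≤ energy U Δ1 Δ2 ξ) :
    η ∈ VTiled (latBox L) k :=
  minimal_energy_configurations_are_tb_tiled_general U Δ1 Δ2 hΔ1 hΔ1U L k hk η hη hmin
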